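/- With the setup of the shift map above, the original coloring χ can be uniquely reconstructed from any χ' = χ^s_S, the set W, and the direction s, via: χ(v) = χ'(v) for v ∉ W, and χ(v) = f(χ'(σ_s(v))) for v ∈ W. In particular, for fixed W and s the maps χ ↦ χ^s_S are injective in χ (jointly over all S) in the sense that distinct χ cannot yield the same χ^s_S with the same W, s, S. -/
import Mathlib


/-- Nearest-neighbor adjacency on `ℤ^d`. -/
def adjZ {d : ℕ} (x y : Fin d → ℤ) : Prop :=
  ∃ i, (y i = x i + 1 ∨ y i = x i - 1) ∧ ∀ j, j ≠ i → y j = x j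

/-- Internal vertex boundary of `W ⊆ ℤ^d`. -/
def intBdryZ {d : ℕ} (W : Set (Fin d → ℤ)) : Set (Fin d → ℤ) :=
  {x | x ∈ W ∧ ∃ y, y ∉ W ∧ adjZ x y}

/-- External vertex boundary of `W ⊆ ℤ^d`. -/
def extBdryZ {d : ℕ} (W : Set (Fin d → ℤ)) : Set (Fin d → ℤ) :=
  {y | y ∉ W ∧ ∃ x, x ∈ W ∧ adjZ y x}

/-- The shift `σ_s` in the signed direction `(s, ε)`: add `ε` to coordinate `s`. -/
def shiftZ {d : ℕ} (s : Fin d) (ε : ℤ) (x : Fin d → ℤ) : Fin d → ℤ :=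
  Function.update x s (x s + ε)

/-- `W^s = {x ∈ ∂_int W : σ_{-s}(x) ∉ W}`. -/
def sideSet {d : ℕ} (W : Set (Fin d → ℤ)) (s : Fin d) (ε : ℤ) :
    Set (Fin d → ℤ) :=
  {x | x ∈ intBdryZ W ∧ shiftZ s (-ε) x ∉ W}

/-- The map `f` fixing color `0` and transposing colors `1` and `2`. -/
def swap12 : Fin 3 → Fin 3 := fun c => if c = 1 then 2 else if c = 2 then 1 else 0

open Classical in
/-- The modified coloring `χ^s_S`: `0` on `S`, `χ` on `(W^s \ S) ∪ (V \ W)`,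
and `f(χ(σ_{-s}(v)))` on `W \ W^s`. -/
noncomputable def chiShift {d : ℕ} (χ : (Fin d → ℤ) → Fin 3)
    (W S : Set (Fin d → ℤ)) (s : Fin d) (ε : ℤ) : (Fin d → ℤ) → Fin 3 :=
  fun v =>
    if v ∈ S then 0
    else if v ∈ W ∧ v ∉ sideSet W s ε then swap12 (χ (shiftZ s (-ε) v))
    else χ v

lemma swap12_swap12 : ∀ c, swap12 (swap12 c) = c := by decide

lemma swap12_of_ne : ∀ a b : Fin 3, a ≠ 0 → b ≠ 0 → a ≠ b → a = swap12 b := by decide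

lemma shift_shift {d : ℕ} (s : Fin d) (ε : ℤ) (v : Fin d → ℤ) :
    shiftZ s (-ε) (shiftZ s ε v) = v := by
  funext j
  simp [shiftZ, Function.update]
  split <;> simp_all

lemma adj_shift {d : ℕ} (s : Fin d) (ε : ℤ) (hε : ε = 1 ∨ ε = -1) (v : Fin d → ℤ) :
    adjZ v (shiftZ s ε v) := by
  refine ⟨s, ?_, fun j hj => Function.update_of_ne hj _ _⟩
  rcases hε with h | h <;> subst h <;> simp [shiftZ] <;> ring

lemma recon_aux {d : ℕ} (χ : (Fin d → ℤ) → Fin 3) (hχ : ∀ u v, adjZ u v → χ u ≠ χ v)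
    (W : Set (Fin d → ℤ)) (hfree : ∀ x ∈ intBdryZ W ∪ extBdryZ W, χ x ≠ 0)
    (s : Fin d) (ε : ℤ) (hε : ε = 1 ∨ ε = -1)
    (S : Set (Fin d → ℤ)) (hS : S ⊆ sideSet W s ε) :
    (∀ v, v ∉ W → χ v = chiShift χ W S s ε v) ∧
      (∀ v, v ∈ W → χ v = swap12 (chiShift χ W S s ε (shiftZ s ε v))) := by
  constructor
  · intro v hv
    unfold chiShift
    rw [if_neg (fun h => hv ((hS h).1.1)), if_neg (fun h => hv h.1)]
  · intro v hv
    set w := shiftZ s ε v with hw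
    have hwv : shiftZ s (-ε) w = v := shift_shift s ε v
    have hwS : w ∉ S := fun h => (hS h).2 (hwv ▸ hv)
    unfold chiShift
    rw [if_neg hwS]
    by_cases hc : w ∈ W ∧ w ∉ sideSet W s ε
    · rw [if_pos hc, hwv, swap12_swap12]
    · rw [if_neg hc]
      have hwW : w ∉ W := by
        intro hwW
        rcases not_and_or.mp hc with h | h
        · exact h hwW
        · exact (not_not.mp h).2 (hwv ▸ hv)
      have hadj : adjZ v w := adj_shift s ε hε v
      have hadj' : adjZ w v := by
        refine ⟨s, ?_, fun j hj => (Function.update_of_ne hj _ _).symm⟩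
        rcases hε with h | h <;> subst h <;> simp [hw, shiftZ] <;> omega
      have h1 : χ v ≠ 0 := hfree v (Or.inl ⟨hv, w, hwW, hadj⟩)
      have h2 : χ w ≠ 0 := hfree w (Or.inr ⟨hwW, v, hv, hadj'⟩)
      exact swap12_of_ne _ _ h1 h2 (hχ v w hadj)

/-- With the setup of the shift map: the original coloring `χ` can be
reconstructed from `χ' = χ^s_S`, `W` and `s` via `χ(v) = χ'(v)` for `v ∉ W`
and `χ(v) = f(χ'(σ_s(v)))` for `v ∈ W`. In particular, for fixed `W`, `s`,
`S` the map `χ ↦ χ^s_S` is injective: distinct colorings `χ` (satisfying the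
boundary hypotheses) cannot yield the same `χ^s_S`. -/
theorem chiShift_reconstruction {d : ℕ} (hd : 1 ≤ d)
    (χ : (Fin d → ℤ) → Fin 3) (hχ : ∀ u v, adjZ u v → χ u ≠ χ v)
    (W : Set (Fin d → ℤ))
    (hint : ∀ x ∈ intBdryZ W, ¬ Even (∑ i, x i))
    (hext : ∀ x ∈ extBdryZ W, Even (∑ i, x i))
    (hfree : ∀ x ∈ intBdryZ W ∪ extBdryZ W, χ x ≠ 0)
    (s : Fin d) (ε : ℤ) (hε : ε = 1 ∨ ε = -1)
    (S : Set (Fin d → ℤ)) (hS : S ⊆ sideSet W s ε) :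
    (∀ v, v ∉ W → χ v = chiShift χ W S s ε v) ∧
      (∀ v, v ∈ W → χ v = swap12 (chiShift χ W S s ε (shiftZ s ε v))) ∧
      (∀ χ₂ : (Fin d → ℤ) → Fin 3, (∀ u v, adjZ u v → χ₂ u ≠ χ₂ v) →
        (∀ x ∈ intBdryZ W ∪ extBdryZ W, χ₂ x ≠ 0) →
        chiShift χ W S s ε = chiShift χ₂ W S s ε → χ = χ₂) := by
  obtain ⟨p1, p2⟩ := recon_aux χ hχ W hfree s ε hε S hS
  refine ⟨p1, p2, ?_⟩
  intro χ₂ h2 hf2 heq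
  obtain ⟨q1, q2⟩ := recon_aux χ₂ h2 W hf2 s ε hε S hS
  funext v
  by_cases hv : v ∈ W
  · rw [p2 v hv, heq, ← q2 v hv]
  · rw [p1 v hv, heq, ← q1 v hv]
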